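/- arXiv:2404.16537 — 3 statements merged into one kernel-verified Lean document; each statement's English description precedes it below -/
import Mathlib

section
/- Let T : H → H' be a compact linear operator between Hilbert spaces. Among all subspaces V ⊆ H' of dimension at most k, the span Λ_k of the k leading left singular vectors of T minimizes the quantity ‖T - proj_V ∘ T‖, i.e. for every subspace V of dimension ≤ k one has ‖T - proj_{Λ_k} ∘ T‖ ≤ ‖T - proj_V ∘ T‖. -/
open RealInnerProductSpace

/-! The two sides are separated by `σ k`. Any subspace containing `f 0, …, f (k-1)` is at
distance at most the tail `∑_{n ≥ k} σ n ⟪e n, x⟫ f n` from `T x`, whose norm is at most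
`σ k ‖x‖` by Bessel's inequality. Conversely, if `dim V ≤ k`, a dimension count gives a nonzero
`x` in the span of `e 0, …, e k` with `T x ⊥ V`, and on that span `‖T x‖ ≥ σ k ‖x‖`. -/

section

variable {ι E F : Type*} [NormedAddCommGroup E] [InnerProductSpace ℝ E]
  [NormedAddCommGroup F] [InnerProductSpace ℝ F]

theorem Submodule.norm_sub_starProjection_le {U : Submodule ℝ E} [U.HasOrthogonalProjection]
    (y : E) {z : E} (hz : z ∈ U) : ‖y - U.starProjection y‖ ≤ ‖y - z‖ := by
  rw [starProjection_minimal]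
  exact ciInf_le ⟨0, Set.forall_mem_range.mpr fun _ => norm_nonneg _⟩ (⟨z, hz⟩ : U)

theorem Orthonormal.norm_sum_smul_sq {v : ι → E} (hv : Orthonormal ℝ v) (a : ι → ℝ)
    (s : Finset ι) : ‖∑ i ∈ s, a i • v i‖ ^ 2 = ∑ i ∈ s, a i ^ 2 := by
  rw [← real_inner_self_eq_norm_sq, hv.inner_sum]
  simp [sq]

theorem Orthonormal.inner_right_tsum {v : ι → E} (hv : Orthonormal ℝ v) {a : ι → ℝ}
    (ha : Summable fun i => a i • v i) (i : ι) : ⟪v i, ∑' j, a j • v j⟫ = a i := by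
  classical
  rw [← innerSL_apply_apply ℝ, (innerSL ℝ (v i)).map_tsum ha, tsum_eq_single i]
  · simp [hv.norm_eq_one]
  · intro j hj
    simp [hv.inner_eq_zero (Ne.symm hj)]

theorem Orthonormal.sum_inner_sq_eq_norm_sq_of_mem_span [Fintype ι] {v : ι → E}
    (hv : Orthonormal ℝ v) {x : E} (hx : x ∈ Submodule.span ℝ (Set.range v)) :
    ∑ i, ⟪v i, x⟫ ^ 2 = ‖x‖ ^ 2 := by
  obtain ⟨a, rfl⟩ := Submodule.mem_span_range_iff_exists_fun ℝ |>.mp hx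
  simp only [hv.inner_right_fintype, hv.norm_sum_smul_sq]

section Diagonal

variable {e : ι → E} {f : ι → F} {σ : ι → ℝ} {C : ℝ}

theorem Orthonormal.summable_mul_inner_smul [CompleteSpace F] (he : Orthonormal ℝ e)
    (hf : Orthonormal ℝ f) (hσ : ∀ i, |σ i| ≤ C) (x : E) :
    Summable fun i => (σ i * ⟪e i, x⟫) • f i := by
  have key := hf.orthogonalFamily.summable_iff_norm_sq_summable (𝕜 := ℝ) fun i => σ i * ⟪e i, x⟫
  simp only [LinearIsometry.toSpanSingleton_apply] at key
  rw [key]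
  refine Summable.of_nonneg_of_le (fun _ => by positivity) (fun i => ?_)
    ((he.inner_products_summable x).mul_left (C ^ 2))
  rw [norm_mul, mul_pow, Real.norm_eq_abs]
  gcongr
  exact hσ i

theorem Orthonormal.norm_tsum_mul_inner_smul_le [CompleteSpace F] (he : Orthonormal ℝ e)
    (hf : Orthonormal ℝ f) (hC : 0 ≤ C) (hσ : ∀ i, |σ i| ≤ C) (x : E) :
    ‖∑' i, (σ i * ⟪e i, x⟫) • f i‖ ≤ C * ‖x‖ := by
  refine le_of_tendsto' (he.summable_mul_inner_smul hf hσ x).hasSum.norm fun s => ?_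
  refine le_of_pow_le_pow_left₀ two_ne_zero (by positivity) ?_
  calc ‖∑ i ∈ s, (σ i * ⟪e i, x⟫) • f i‖ ^ 2 = ∑ i ∈ s, σ i ^ 2 * ⟪e i, x⟫ ^ 2 := by
        simp only [hf.norm_sum_smul_sq, mul_pow]
    _ ≤ ∑ i ∈ s, C ^ 2 * ⟪e i, x⟫ ^ 2 := by
        gcongr ∑ _ ∈ s, ?_ * _ with i
        exact sq_le_sq' (abs_le.mp (hσ i)).1 (abs_le.mp (hσ i)).2
    _ ≤ (C * ‖x‖) ^ 2 := by
        rw [← Finset.mul_sum, mul_pow]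
        gcongr
        simpa only [Real.norm_eq_abs, sq_abs] using he.sum_inner_products_le x

theorem mul_norm_le_norm_apply_of_mem_span [Fintype ι] (T : E →L[ℝ] F) (he : Orthonormal ℝ e)
    (hf : Orthonormal ℝ f) (hTf : ∀ x i, ⟪f i, T x⟫ = σ i * ⟪e i, x⟫) (hC : 0 ≤ C)
    (hσ : ∀ i, C ≤ σ i) {x : E} (hx : x ∈ Submodule.span ℝ (Set.range e)) :
    C * ‖x‖ ≤ ‖T x‖ := by
  refine le_of_pow_le_pow_left₀ two_ne_zero (norm_nonneg _) ?_
  calc (C * ‖x‖) ^ 2 = ∑ i, C ^ 2 * ⟪e i, x⟫ ^ 2 := by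
        rw [mul_pow, ← Finset.mul_sum, he.sum_inner_sq_eq_norm_sq_of_mem_span hx]
    _ ≤ ∑ i, ‖⟪f i, T x⟫‖ ^ 2 := by
        gcongr with i
        rw [hTf, Real.norm_eq_abs, sq_abs, mul_pow]
        gcongr
        exact hσ i
    _ ≤ ‖T x‖ ^ 2 := hf.sum_inner_products_le (T x)

end Diagonal

theorem Submodule.exists_mem_ne_zero_starProjection_eq_zero (W : Submodule ℝ E)
    [FiniteDimensional ℝ W] (V : Submodule ℝ F) [FiniteDimensional ℝ V]
    (h : Module.finrank ℝ V < Module.finrank ℝ W) (L : E →ₗ[ℝ] F) :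
    ∃ x ∈ W, x ≠ 0 ∧ V.starProjection (L x) = 0 := by
  obtain ⟨⟨x, hxW⟩, hx, hx0⟩ := Submodule.exists_mem_ne_zero_of_ne_bot
    (LinearMap.ker_ne_bot_of_finrank_lt
      (f := V.orthogonalProjectionOnto.toLinearMap ∘ₗ L ∘ₗ W.subtype) h)
  refine ⟨x, hxW, fun h0 => hx0 (by simp [h0]), ?_⟩
  rw [LinearMap.mem_ker] at hx
  rw [starProjection_apply]
  exact congrArg Subtype.val hx

section SingularValueDecomposition

variable [CompleteSpace F] (T : E →L[ℝ] F) {e : ℕ → E} {f : ℕ → F} {σ : ℕ → ℝ}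

theorem Orthonormal.summable_mul_inner_smul_of_antitone (he : Orthonormal ℝ e)
    (hf : Orthonormal ℝ f) (hσ0 : ∀ n, 0 ≤ σ n) (hσmono : Antitone σ) (x : E) :
    Summable fun n => (σ n * ⟪e n, x⟫) • f n :=
  he.summable_mul_inner_smul hf (fun n => (abs_of_nonneg (hσ0 n)).trans_le (hσmono n.zero_le)) x

theorem opNorm_sub_starProjection_comp_le (he : Orthonormal ℝ e) (hf : Orthonormal ℝ f)
    (hσ0 : ∀ n, 0 ≤ σ n) (hσmono : Antitone σ)
    (hSVD : ∀ x : E, T x = ∑' n : ℕ, (σ n * ⟪e n, x⟫) • f n) {k : ℕ} (U : Submodule ℝ F)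
    [U.HasOrthogonalProjection] (hU : ∀ n < k, f n ∈ U) :
    ‖T - U.starProjection ∘L T‖ ≤ σ k := by
  refine ContinuousLinearMap.opNorm_le_bound _ (hσ0 k) fun x => ?_
  have hsum := he.summable_mul_inner_smul_of_antitone hf hσ0 hσmono x
  have hhead : ∑ n ∈ Finset.range k, (σ n * ⟪e n, x⟫) • f n ∈ U :=
    U.sum_mem fun n hn => U.smul_mem _ (hU n (Finset.mem_range.mp hn))
  have htail : ∀ n : ↑(↑(Finset.range k) : Set ℕ)ᶜ, |σ n| ≤ σ k := fun n =>
    (abs_of_nonneg (hσ0 n)).trans_le (hσmono (by simpa using n.2))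
  calc ‖T x - U.starProjection (T x)‖
      ≤ ‖T x - ∑ n ∈ Finset.range k, (σ n * ⟪e n, x⟫) • f n‖ :=
        U.norm_sub_starProjection_le _ hhead
    _ = ‖∑' n : ↑(↑(Finset.range k) : Set ℕ)ᶜ, (σ n * ⟪e n, x⟫) • f n‖ := by
        rw [hSVD x, ← hsum.sum_add_tsum_compl, add_sub_cancel_left]
    _ ≤ σ k * ‖x‖ :=
        (he.comp _ Subtype.val_injective).norm_tsum_mul_inner_smul_le
          (hf.comp _ Subtype.val_injective) (hσ0 k) htail x

theorem le_opNorm_sub_starProjection_comp (he : Orthonormal ℝ e) (hf : Orthonormal ℝ f)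
    (hσ0 : ∀ n, 0 ≤ σ n) (hσmono : Antitone σ)
    (hSVD : ∀ x : E, T x = ∑' n : ℕ, (σ n * ⟪e n, x⟫) • f n) {k : ℕ} (V : Submodule ℝ F)
    [FiniteDimensional ℝ V] (hV : Module.finrank ℝ V ≤ k) :
    σ k ≤ ‖T - V.starProjection ∘L T‖ := by
  have hTf : ∀ x n, ⟪f n, T x⟫ = σ n * ⟪e n, x⟫ := fun x n => by
    rw [hSVD x]
    exact hf.inner_right_tsum (he.summable_mul_inner_smul_of_antitone hf hσ0 hσmono x) n
  let W := Submodule.span ℝ (Set.range (e ∘ (Fin.val : Fin (k + 1) → ℕ)))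
  have : FiniteDimensional ℝ W := FiniteDimensional.span_of_finite ℝ (Set.finite_range _)
  have hW : Module.finrank ℝ W = k + 1 := by
    rw [finrank_span_eq_card (he.linearIndependent.comp _ Fin.val_injective), Fintype.card_fin]
  obtain ⟨x, hxW, hx0, hPx⟩ :=
    W.exists_mem_ne_zero_starProjection_eq_zero V (by omega) (T : E →ₗ[ℝ] F)
  have hTx : σ k * ‖x‖ ≤ ‖T x‖ :=
    mul_norm_le_norm_apply_of_mem_span T (he.comp _ Fin.val_injective)
      (hf.comp _ Fin.val_injective) (fun x i => hTf x i) (hσ0 k)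
      (fun i => hσmono (Nat.lt_succ_iff.mp i.2)) hxW
  refine le_of_mul_le_mul_right (hTx.trans ?_) (norm_pos_iff.mpr hx0)
  calc ‖T x‖ = ‖(T - V.starProjection ∘L T) x‖ := by
        simp [show V.starProjection (T x) = 0 from hPx]
    _ ≤ ‖T - V.starProjection ∘L T‖ * ‖x‖ := ContinuousLinearMap.le_opNorm _ _

end SingularValueDecomposition

end

theorem stmt1_general
    {H H' : Type*} [NormedAddCommGroup H] [InnerProductSpace ℝ H]
    [NormedAddCommGroup H'] [InnerProductSpace ℝ H'] [CompleteSpace H']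
    (T : H →L[ℝ] H')
    (e : ℕ → H) (f : ℕ → H') (σ : ℕ → ℝ)
    (he : Orthonormal ℝ e) (hf : Orthonormal ℝ f)
    (hσ0 : ∀ n, 0 ≤ σ n) (hσmono : Antitone σ)
    (hSVD : ∀ x : H, T x = ∑' n : ℕ, (σ n * ⟪e n, x⟫) • f n)
    (k : ℕ) :
    ∀ (V : Submodule ℝ H') [FiniteDimensional ℝ V], Module.finrank ℝ V ≤ k →
      haveI : FiniteDimensional ℝ (Submodule.span ℝ (f '' Set.Iio k)) :=
        FiniteDimensional.span_of_finite ℝ ((Set.finite_Iio k).image f)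
      ‖T - (Submodule.span ℝ (f '' Set.Iio k)).subtypeL ∘L
          Submodule.orthogonalProjectionOnto (Submodule.span ℝ (f '' Set.Iio k)) ∘L T‖ ≤
        ‖T - V.subtypeL ∘L Submodule.orthogonalProjectionOnto V ∘L T‖ := by
  intro V _ hV
  have : FiniteDimensional ℝ (Submodule.span ℝ (f '' Set.Iio k)) :=
    FiniteDimensional.span_of_finite ℝ ((Set.finite_Iio k).image f)
  have hΛ : ∀ n < k, f n ∈ Submodule.span ℝ (f '' Set.Iio k) := fun n hn =>
    Submodule.subset_span (Set.mem_image_of_mem f hn)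
  exact (opNorm_sub_starProjection_comp_le T he hf hσ0 hσmono hSVD _ hΛ).trans
    (le_opNorm_sub_starProjection_comp T he hf hσ0 hσmono hSVD V hV)

/-- Kolmogorov optimality (Schmidt–Eckart–Young–Mirsky): among all subspaces
`V ⊆ H'` of dimension at most `k`, the span `Λ_k` of the `k` leading left
singular vectors of a compact operator `T` minimizes `‖T - proj_V ∘ T‖`. -/
theorem stmt1
    {H H' : Type*} [NormedAddCommGroup H] [InnerProductSpace ℝ H] [CompleteSpace H]
    [NormedAddCommGroup H'] [InnerProductSpace ℝ H'] [CompleteSpace H']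
    (T : H →L[ℝ] H') (hT : IsCompactOperator T)
    (e : ℕ → H) (f : ℕ → H') (σ : ℕ → ℝ)
    (he : Orthonormal ℝ e) (hf : Orthonormal ℝ f)
    (hσ0 : ∀ n, 0 ≤ σ n) (hσmono : Antitone σ)
    (hSVD : ∀ x : H, T x = ∑' n : ℕ, (σ n * ⟪e n, x⟫) • f n)
    (k : ℕ) :
    ∀ (V : Submodule ℝ H') [FiniteDimensional ℝ V], Module.finrank ℝ V ≤ k →
      haveI : FiniteDimensional ℝ (Submodule.span ℝ (f '' Set.Iio k)) :=
        FiniteDimensional.span_of_finite ℝ ((Set.finite_Iio k).image f)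
      ‖T - (Submodule.span ℝ (f '' Set.Iio k)).subtypeL ∘L
          Submodule.orthogonalProjectionOnto (Submodule.span ℝ (f '' Set.Iio k)) ∘L T‖ ≤
        ‖T - V.subtypeL ∘L Submodule.orthogonalProjectionOnto V ∘L T‖ :=
  stmt1_general T e f σ he hf hσ0 hσmono hSVD k
end

section
/- Let V be a real Hilbert space and let {V_η}_{η ∈ N} be a finite family of closed subspaces. Suppose P : V → V is a linear map such that for each v ∈ V there exist elements v_η ∈ V_η, η ∈ N, with P v = Σ_η v_η and Σ_η ‖v_η‖² ≤ C² ‖v‖². Let R ∈ V' vanish on the kernel conditions in the sense R(v) = R(P v) for all v ∈ V. Then ‖R‖_{V'} ≤ C (Σ_{η ∈ N} ‖R|_{V_η}‖²_{V_η'})^{1/2}. -/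
set_option synthInstance.maxHeartbeats 1000000
set_option maxHeartbeats 1000000


/-- Abstract localization principle for dual norms (Buhr–Engwer–Ohlberger–Rave):
if `P : V → V` admits stable decompositions `P v = Σ_η v_η` with `v_η ∈ V_η`
and `Σ_η ‖v_η‖² ≤ C² ‖v‖²`, and the residual functional `R` satisfies
`R(v) = R(P v)` for all `v`, then `‖R‖ ≤ C (Σ_η ‖R|_{V_η}‖²)^{1/2}`. -/
theorem stmt3
    {V : Type*} [NormedAddCommGroup V] [InnerProductSpace ℝ V] [CompleteSpace V]
    {ι : Type*} [Fintype ι]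
    (Vs : ι → Submodule ℝ V) (hVs : ∀ η, IsClosed (Vs η : Set V))
    (P : V →ₗ[ℝ] V) (C : ℝ) (hC : 0 ≤ C)
    (hdecomp : ∀ v : V, ∃ w : ι → V, (∀ η, w η ∈ Vs η) ∧ P v = ∑ η, w η ∧
      ∑ η, ‖w η‖ ^ 2 ≤ C ^ 2 * ‖v‖ ^ 2)
    (R : V →L[ℝ] ℝ) (hRP : ∀ v : V, R v = R (P v)) :
    ‖R‖ ≤ C * Real.sqrt (∑ η, ‖R.comp (Vs η).subtypeL‖ ^ 2) := by
  set S := Real.sqrt (∑ η, ‖R.comp (Vs η).subtypeL‖ ^ 2) with hS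
  have hS0 : 0 ≤ S := Real.sqrt_nonneg _
  apply R.opNorm_le_bound (by positivity)
  intro v
  obtain ⟨w, hw, hPv, hsum⟩ := hdecomp v
  have h1 : |R v| ≤ ∑ η, ‖R.comp (Vs η).subtypeL‖ * ‖w η‖ := by
    rw [hRP v, hPv, map_sum]
    refine (Finset.abs_sum_le_sum_abs _ _).trans (Finset.sum_le_sum fun η _ => ?_)
    have : R (w η) = (R.comp (Vs η).subtypeL) ⟨w η, hw η⟩ := rfl
    rw [this]
    calc |(R.comp (Vs η).subtypeL) ⟨w η, hw η⟩|
        ≤ ‖R.comp (Vs η).subtypeL‖ * ‖(⟨w η, hw η⟩ : Vs η)‖ :=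
          (R.comp (Vs η).subtypeL).le_opNorm _
      _ = ‖R.comp (Vs η).subtypeL‖ * ‖w η‖ := rfl
  have h2 : (∑ η, ‖R.comp (Vs η).subtypeL‖ * ‖w η‖) ^ 2 ≤
      (∑ η, ‖R.comp (Vs η).subtypeL‖ ^ 2) * (∑ η, ‖w η‖ ^ 2) :=
    Finset.sum_mul_sq_le_sq_mul_sq _ _ _
  have h3 : (∑ η, ‖R.comp (Vs η).subtypeL‖ * ‖w η‖) ≤ S * (C * ‖v‖) := by
    have hnn : 0 ≤ ∑ η, ‖R.comp (Vs η).subtypeL‖ * ‖w η‖ :=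
      Finset.sum_nonneg fun η _ => mul_nonneg (R.comp (Vs η).subtypeL).opNorm_nonneg (norm_nonneg _)
    have := h2.trans (mul_le_mul_of_nonneg_left hsum
      (Finset.sum_nonneg fun η _ => sq_nonneg _))
    calc (∑ η, ‖R.comp (Vs η).subtypeL‖ * ‖w η‖)
        = Real.sqrt ((∑ η, ‖R.comp (Vs η).subtypeL‖ * ‖w η‖) ^ 2) := by
          rw [Real.sqrt_sq hnn]
      _ ≤ Real.sqrt ((∑ η, ‖R.comp (Vs η).subtypeL‖ ^ 2) * (C ^ 2 * ‖v‖ ^ 2)) :=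
          Real.sqrt_le_sqrt this
      _ = S * (C * ‖v‖) := by
          rw [Real.sqrt_mul (Finset.sum_nonneg fun η _ => sq_nonneg _), hS]
          congr 1
          rw [show C ^ 2 * ‖v‖ ^ 2 = (C * ‖v‖) ^ 2 by ring,
            Real.sqrt_sq (mul_nonneg hC (norm_nonneg _))]
  calc |R v| ≤ ∑ η, ‖R.comp (Vs η).subtypeL‖ * ‖w η‖ := h1
    _ ≤ S * (C * ‖v‖) := h3
    _ = C * S * ‖v‖ := by ring
end

section
/- Under the assumptions of the abstract localization principle, combining it with the coercivity-based residual bound yields the localized a posteriori error estimate: if a is coercive with constant α, u solves a(u,·) = l, u_rb ∈ V_rb is a Galerkin approximation with residual R(v) = l(v) - a(u_rb, v) satisfying R(v) = R(Pv) for all v (with P a stable decomposition map with stability constant C as above), then ‖u - u_rb‖ ≤ α^{-1} C (Σ_{η ∈ N} ‖R|_{V_η}‖²_{V_η'})^{1/2}. -/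
/-!
Applying the residual `R = l - a(u_rb, ·)` to the error `e = u - u_rb` gives `R e = a(e, e)`, so
coercivity yields `α ‖e‖ ≤ ‖R‖`. Since `R = R ∘ P`, evaluating `R` on a stable decomposition
`P v = Σ_η v_η` and applying Cauchy–Schwarz to `Σ_η ‖R|_{V_η}‖ ‖v_η‖` bounds the dual norm by
`‖R‖ ≤ C (Σ_η ‖R|_{V_η}‖²)^{1/2}`.
-/

open Finset

namespace ContinuousLinearMap

variable {𝕜 E F ι : Type*} [NontriviallyNormedField 𝕜] [SeminormedAddCommGroup E]
  [NormedSpace 𝕜 E] [SeminormedAddCommGroup F] [NormedSpace 𝕜 F] [Fintype ι]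

theorem norm_apply_le_norm_comp_subtypeL (f : E →L[𝕜] F) {S : Submodule 𝕜 E} {v : E}
    (hv : v ∈ S) : ‖f v‖ ≤ ‖f.comp S.subtypeL‖ * ‖v‖ :=
  (f.comp S.subtypeL).le_opNorm ⟨v, hv⟩

theorem norm_apply_sum_le_sqrt_mul_sqrt (f : E →L[𝕜] F) (Vs : ι → Submodule 𝕜 E)
    {w : ι → E} (hw : ∀ η, w η ∈ Vs η) :
    ‖f (∑ η, w η)‖ ≤
      √(∑ η, ‖f.comp (Vs η).subtypeL‖ ^ 2) * √(∑ η, ‖w η‖ ^ 2) :=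
  calc ‖f (∑ η, w η)‖ ≤ ∑ η, ‖f (w η)‖ := by
        rw [map_sum]; exact norm_sum_le _ _
    _ ≤ ∑ η, ‖f.comp (Vs η).subtypeL‖ * ‖w η‖ :=
        sum_le_sum fun η _ ↦ f.norm_apply_le_norm_comp_subtypeL (hw η)
    _ ≤ _ := Real.sum_mul_le_sqrt_mul_sqrt _ _ _

/-- The abstract localization principle. -/
theorem opNorm_le_of_stable_decomposition (f : E →L[𝕜] F) (Vs : ι → Submodule 𝕜 E)
    (P : E →ₗ[𝕜] E) {C : ℝ} (hC : 0 ≤ C)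
    (hdecomp : ∀ v : E, ∃ w : ι → E, (∀ η, w η ∈ Vs η) ∧ P v = ∑ η, w η ∧
      ∑ η, ‖w η‖ ^ 2 ≤ C ^ 2 * ‖v‖ ^ 2)
    (hfP : ∀ v : E, f v = f (P v)) :
    ‖f‖ ≤ C * √(∑ η, ‖f.comp (Vs η).subtypeL‖ ^ 2) := by
  refine f.opNorm_le_bound (by positivity) fun v ↦ ?_
  obtain ⟨w, hw, hPv, hw_stable⟩ := hdecomp v
  have hw_norm : √(∑ η, ‖w η‖ ^ 2) ≤ C * ‖v‖ :=
    Real.sqrt_le_iff.mpr ⟨by positivity, by rwa [mul_pow]⟩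
  calc ‖f v‖ = ‖f (∑ η, w η)‖ := by rw [hfP, hPv]
    _ ≤ √(∑ η, ‖f.comp (Vs η).subtypeL‖ ^ 2) * √(∑ η, ‖w η‖ ^ 2) :=
        f.norm_apply_sum_le_sqrt_mul_sqrt Vs hw
    _ ≤ √(∑ η, ‖f.comp (Vs η).subtypeL‖ ^ 2) * (C * ‖v‖) := by gcongr
    _ = C * √(∑ η, ‖f.comp (Vs η).subtypeL‖ ^ 2) * ‖v‖ := by ring

end ContinuousLinearMap

theorem norm_le_inv_mul_opNorm_of_coercive {E : Type*} [SeminormedAddCommGroup E]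
    [NormedSpace ℝ E] (f : E →L[ℝ] ℝ) {α : ℝ} (hα : 0 < α) {e : E}
    (hcoer : α * ‖e‖ ^ 2 ≤ f e) : ‖e‖ ≤ α⁻¹ * ‖f‖ := by
  rw [le_inv_mul_iff₀ hα]
  have hbound : α * ‖e‖ * ‖e‖ ≤ ‖f‖ * ‖e‖ :=
    calc α * ‖e‖ * ‖e‖ = α * ‖e‖ ^ 2 := by ring
      _ ≤ f e := hcoer
      _ ≤ ‖f e‖ := Real.le_norm_self _
      _ ≤ ‖f‖ * ‖e‖ := f.le_opNorm e
  rcases (norm_nonneg e).eq_or_lt with he | he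
  · rw [← he, mul_zero]; exact norm_nonneg f
  · exact le_of_mul_le_mul_right hbound he

theorem stmt4_general
    {V : Type*} [NormedAddCommGroup V] [InnerProductSpace ℝ V]
    {ι : Type*} [Fintype ι]
    (a : V →L[ℝ] V →L[ℝ] ℝ) (α : ℝ) (hα : 0 < α)
    (hcoer : ∀ v : V, α * ‖v‖ ^ 2 ≤ a v v)
    (l : V →L[ℝ] ℝ)
    (u : V) (hu : ∀ v : V, a u v = l v)
    (urb : V)
    (Vs : ι → Submodule ℝ V)
    (P : V →ₗ[ℝ] V) (C : ℝ) (hC : 0 ≤ C)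
    (hdecomp : ∀ v : V, ∃ w : ι → V, (∀ η, w η ∈ Vs η) ∧ P v = ∑ η, w η ∧
      ∑ η, ‖w η‖ ^ 2 ≤ C ^ 2 * ‖v‖ ^ 2)
    (hRP : ∀ v : V, (l - a urb) v = (l - a urb) (P v)) :
    ‖u - urb‖ ≤
      α⁻¹ * C * Real.sqrt (∑ η, ‖(l - a urb).comp (Vs η).subtypeL‖ ^ 2) := by
  have hresidual : (l - a urb) (u - urb) = a (u - urb) (u - urb) := by
    simp only [sub_apply, map_sub, hu]
  calc ‖u - urb‖ ≤ α⁻¹ * ‖l - a urb‖ :=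
        norm_le_inv_mul_opNorm_of_coercive _ hα (hresidual ▸ hcoer (u - urb))
    _ ≤ α⁻¹ * (C * Real.sqrt (∑ η, ‖(l - a urb).comp (Vs η).subtypeL‖ ^ 2)) := by
        gcongr
        exact (l - a urb).opNorm_le_of_stable_decomposition Vs P hC hdecomp hRP
    _ = _ := (mul_assoc _ _ _).symm

/-- Localized a posteriori error estimate: combining coercivity of `a` (with
constant `α`) and the abstract localization principle (with stable
decomposition map `P` and stability constant `C`) yields
`‖u - u_rb‖ ≤ α⁻¹ C (Σ_η ‖R|_{V_η}‖²)^{1/2}` for the residual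
`R = l - a(u_rb, ·)`. -/
theorem stmt4
    {V : Type*} [NormedAddCommGroup V] [InnerProductSpace ℝ V] [CompleteSpace V]
    {ι : Type*} [Fintype ι]
    (a : V →L[ℝ] V →L[ℝ] ℝ) (α : ℝ) (hα : 0 < α)
    (hcoer : ∀ v : V, α * ‖v‖ ^ 2 ≤ a v v)
    (l : V →L[ℝ] ℝ)
    (u : V) (hu : ∀ v : V, a u v = l v)
    (Vrb : Submodule ℝ V) (urb : V) (hurb : urb ∈ Vrb)
    (hGal : ∀ v ∈ Vrb, a urb v = l v)
    (Vs : ι → Submodule ℝ V) (hVs : ∀ η, IsClosed (Vs η : Set V))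
    (P : V →ₗ[ℝ] V) (C : ℝ) (hC : 0 ≤ C)
    (hdecomp : ∀ v : V, ∃ w : ι → V, (∀ η, w η ∈ Vs η) ∧ P v = ∑ η, w η ∧
      ∑ η, ‖w η‖ ^ 2 ≤ C ^ 2 * ‖v‖ ^ 2)
    (hRP : ∀ v : V, (l - a urb) v = (l - a urb) (P v)) :
    ‖u - urb‖ ≤
      α⁻¹ * C * Real.sqrt (∑ η, ‖(l - a urb).comp (Vs η).subtypeL‖ ^ 2) :=
  stmt4_general a α hα hcoer l u hu urb Vs P C hC hdecomp hRP
end
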